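/- Let x ∈ ℝ^n satisfy xᵀ(AΓAᵀ + Σ)^{-1}x ≤ r with Γ ⪰ 0, Σ ≻ 0, r > 0. Define y = Γ^{1/2} Aᵀ (AΓAᵀ + Σ)^{-1} x and w = Σ^{1/2} (AΓAᵀ + Σ)^{-1} x. Then A Γ^{1/2} y + Σ^{1/2} w = x, yᵀy ≤ r, and wᵀw ≤ r. -/

import Mathlib

/-!
With `P = A Γ^{1/2}` and `Q = Σ^{1/2}` one has `P Pᵀ + Q Qᵀ = M := A Γ Aᵀ + Σ`, and
`y = Pᵀ M⁻¹ x`, `w = Qᵀ M⁻¹ x`. Hence `P y + Q w = M M⁻¹ x = x` and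
`yᵀy + wᵀw = (M⁻¹ x)ᵀ M (M⁻¹ x) = xᵀ M⁻¹ x ≤ r`; both summands are nonnegative.
-/

open Matrix

open scoped ComplexOrder in
/-- The square root of a positive semidefinite matrix, as defined in the older Mathlib
(`Matrix.PosSemidef.sqrt`, removed since). -/
noncomputable def Matrix.PosSemidef.sqrt {n 𝕜 : Type*} [Fintype n] [DecidableEq n] [RCLike 𝕜]
    {A : Matrix n n 𝕜} (hA : A.PosSemidef) : Matrix n n 𝕜 :=
  (hA.1.eigenvectorUnitary : Matrix n n 𝕜) * diagonal ((↑) ∘ (√·) ∘ hA.1.eigenvalues) *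
    (star hA.1.eigenvectorUnitary : Matrix n n 𝕜)

open scoped ComplexOrder

namespace Matrix.PosSemidef

variable {n 𝕜 : Type*} [Fintype n] [DecidableEq n] [RCLike 𝕜] {A : Matrix n n 𝕜}

lemma conjTranspose_sqrt (hA : A.PosSemidef) : hA.sqrtᴴ = hA.sqrt := by
  rw [sqrt, conjTranspose_mul, conjTranspose_mul, diagonal_conjTranspose, star_eq_conjTranspose,
    conjTranspose_conjTranspose, ← star_eq_conjTranspose, Matrix.mul_assoc]
  congr 3
  ext i
  simp

lemma sqrt_mul_self (hA : A.PosSemidef) : hA.sqrt * hA.sqrt = A := by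
  have hU : (star hA.1.eigenvectorUnitary : Matrix n n 𝕜) * hA.1.eigenvectorUnitary = 1 :=
    Unitary.coe_star_mul_self _
  conv_rhs => rw [hA.1.spectral_theorem, Unitary.conjStarAlgAut_apply]
  simp only [sqrt, Matrix.mul_assoc]
  rw [← Matrix.mul_assoc (star (hA.1.eigenvectorUnitary : Matrix n n 𝕜)), hU, Matrix.one_mul,
    ← Matrix.mul_assoc (diagonal _), diagonal_mul_diagonal]
  congr 3
  funext i
  simp only [Function.comp_apply, ← RCLike.ofReal_mul, Real.mul_self_sqrt (hA.eigenvalues_nonneg i)]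

lemma transpose_sqrt {A : Matrix n n ℝ} (hA : A.PosSemidef) : hA.sqrtᵀ = hA.sqrt := by
  rw [← conjTranspose_eq_transpose_of_trivial, hA.conjTranspose_sqrt]

end Matrix.PosSemidef

namespace Matrix

variable {R m k l : Type*} [CommRing R] [Fintype m] [Fintype k] [Fintype l]

lemma transpose_mulVec_dotProduct_self (P : Matrix m k R) (v : m → R) :
    (Pᵀ *ᵥ v) ⬝ᵥ (Pᵀ *ᵥ v) = v ⬝ᵥ ((P * Pᵀ) *ᵥ v) := by
  rw [dotProduct_mulVec, vecMul_transpose, mulVec_mulVec, dotProduct_comm]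

variable [DecidableEq m] {P : Matrix m k R} {Q : Matrix m l R} {M : Matrix m m R}

lemma mulVec_transpose_mulVec_add_of_mul_transpose_add (hM : P * Pᵀ + Q * Qᵀ = M)
    (hdet : IsUnit M.det) (x : m → R) :
    P *ᵥ (Pᵀ *ᵥ (M⁻¹ *ᵥ x)) + Q *ᵥ (Qᵀ *ᵥ (M⁻¹ *ᵥ x)) = x := by
  rw [mulVec_mulVec (M⁻¹ *ᵥ x), mulVec_mulVec (M⁻¹ *ᵥ x), ← add_mulVec, hM, mulVec_mulVec,
    mul_nonsing_inv _ hdet, one_mulVec]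

lemma dotProduct_transpose_mulVec_add_of_mul_transpose_add (hM : P * Pᵀ + Q * Qᵀ = M)
    (hdet : IsUnit M.det) (x : m → R) :
    (Pᵀ *ᵥ (M⁻¹ *ᵥ x)) ⬝ᵥ (Pᵀ *ᵥ (M⁻¹ *ᵥ x)) + (Qᵀ *ᵥ (M⁻¹ *ᵥ x)) ⬝ᵥ (Qᵀ *ᵥ (M⁻¹ *ᵥ x)) =
      x ⬝ᵥ (M⁻¹ *ᵥ x) := by
  rw [transpose_mulVec_dotProduct_self, transpose_mulVec_dotProduct_self, ← dotProduct_add,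
    ← add_mulVec, hM, mulVec_mulVec, mul_nonsing_inv _ hdet, one_mulVec, dotProduct_comm]

end Matrix

theorem stmt_19_general {n : ℕ} (A Γ Sig : Matrix (Fin n) (Fin n) ℝ)
    (hΓ : Γ.PosSemidef) (hSig : Sig.PosDef) (r : ℝ)
    (x : Fin n → ℝ)
    (hx : x ⬝ᵥ (A * Γ * Aᵀ + Sig)⁻¹ *ᵥ x ≤ r)
    (y w : Fin n → ℝ)
    (hy : y = (hΓ.sqrt * Aᵀ * (A * Γ * Aᵀ + Sig)⁻¹) *ᵥ x)
    (hw : w = (hSig.posSemidef.sqrt * (A * Γ * Aᵀ + Sig)⁻¹) *ᵥ x) :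
    A *ᵥ (hΓ.sqrt *ᵥ y) + hSig.posSemidef.sqrt *ᵥ w = x ∧
      y ⬝ᵥ y ≤ r ∧ w ⬝ᵥ w ≤ r := by
  set M := A * Γ * Aᵀ + Sig
  set P := A * hΓ.sqrt
  set Q := hSig.posSemidef.sqrt
  have hM : P * Pᵀ + Q * Qᵀ = M := by
    rw [transpose_mul, hΓ.transpose_sqrt, hSig.posSemidef.transpose_sqrt, Matrix.mul_assoc,
      ← Matrix.mul_assoc hΓ.sqrt, hΓ.sqrt_mul_self, hSig.posSemidef.sqrt_mul_self,
      ← Matrix.mul_assoc]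
  have hMpos : M.PosDef := by
    simpa only [conjTranspose_eq_transpose_of_trivial] using
      PosDef.posSemidef_add (hΓ.mul_mul_conjTranspose_same A) hSig
  have hdet : IsUnit M.det := hMpos.det_pos.ne'.isUnit
  have hy' : y = Pᵀ *ᵥ (M⁻¹ *ᵥ x) := by
    rw [hy, mulVec_mulVec, transpose_mul, hΓ.transpose_sqrt]
  have hw' : w = Qᵀ *ᵥ (M⁻¹ *ᵥ x) := by
    rw [hw, mulVec_mulVec, hSig.posSemidef.transpose_sqrt]
  have hnorm : y ⬝ᵥ y + w ⬝ᵥ w = x ⬝ᵥ (M⁻¹ *ᵥ x) := by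
    rw [hy', hw', dotProduct_transpose_mulVec_add_of_mul_transpose_add hM hdet]
  have hself (v : Fin n → ℝ) : 0 ≤ v ⬝ᵥ v := by simpa using dotProduct_self_star_nonneg v
  refine ⟨?_, ?_, ?_⟩
  · rw [mulVec_mulVec, hy', hw', mulVec_transpose_mulVec_add_of_mul_transpose_add hM hdet]
  · linarith [hself w]
  · linarith [hself y]

/-- explicit decomposition `x = A Γ^{1/2} y + Σ^{1/2} w` with
`yᵀy ≤ r` and `wᵀw ≤ r`, for `xᵀ (A Γ Aᵀ + Σ)⁻¹ x ≤ r`. -/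
theorem stmt_19 {n : ℕ} (A Γ Sig : Matrix (Fin n) (Fin n) ℝ)
    (hΓ : Γ.PosSemidef) (hSig : Sig.PosDef) (r : ℝ) (hr : 0 < r)
    (x : Fin n → ℝ)
    (hx : x ⬝ᵥ (A * Γ * Aᵀ + Sig)⁻¹ *ᵥ x ≤ r)
    (y w : Fin n → ℝ)
    (hy : y = (hΓ.sqrt * Aᵀ * (A * Γ * Aᵀ + Sig)⁻¹) *ᵥ x)
    (hw : w = (hSig.posSemidef.sqrt * (A * Γ * Aᵀ + Sig)⁻¹) *ᵥ x) :
    A *ᵥ (hΓ.sqrt *ᵥ y) + hSig.posSemidef.sqrt *ᵥ w = x ∧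
      y ⬝ᵥ y ≤ r ∧ w ⬝ᵥ w ≤ r :=
  stmt_19_general A Γ Sig hΓ hSig r x hx y w hy hw
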